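/- arXiv:1908.05321 — 3 statements merged into one kernel-verified Lean document; each statement's English description precedes it below -/
import Mathlib

section
/- In G = ℤ[1/k] ⋊ ℤ with ℤ acting by multiplication by k, every conjugacy class of a nonzero element (y,0) of the base subgroup contains a unique element (x,0) such that x ∈ ℤ and k does not divide x. -/
/-- ℤ[1/k] = {x ∈ ℚ | k^e x ∈ ℤ for some e ∈ ℤ}. -/
def Zk (k : ℤ) : Set ℚ := {x | ∃ e : ℤ, ∃ n : ℤ, (k : ℚ) ^ e * x = (n : ℚ)}

/-- Multiplication in G = ℤ[1/k] ⋊ ℤ (modelled on ℚ × ℤ): (x,a)(y,b) = (x + k^a y, a+b). -/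
def mulG (k : ℤ) (g h : ℚ × ℤ) : ℚ × ℤ := (g.1 + (k : ℚ) ^ g.2 * h.1, g.2 + h.2)

/-- Inversion in G: (x,a)⁻¹ = (-k^{-a} x, -a). -/
def invG (k : ℤ) (g : ℚ × ℤ) : ℚ × ℤ := (-((k : ℚ) ^ (-g.2) * g.1), -g.2)

/-- Conjugation h^g = g h g⁻¹. -/
def conjG (k : ℤ) (g h : ℚ × ℤ) : ℚ × ℤ := mulG k (mulG k g h) (invG k g)

/-- Two elements are conjugate in G = ℤ[1/k] ⋊ ℤ (conjugator has base coordinate in ℤ[1/k]). -/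
def IsConjG (k : ℤ) (h h' : ℚ × ℤ) : Prop :=
  ∃ g : ℚ × ℤ, g.1 ∈ Zk k ∧ conjG k g h = h'

/-! Conjugating (y, 0) by (z, a) gives (k^a y, 0), so the class of (y, 0) is {(k^e y, 0)}.
Clearing denominators and splitting off the largest power of k dividing the numerator yields a
representative not divisible by k; two such representatives differ by a factor k^a, and since
neither is divisible by k, a = 0. -/

theorem eq_zero_of_pow_mul_eq_of_not_dvd {M : Type*} [CommMonoid M] {k m x : M} {n : ℕ}
    (h : k ^ n * m = x) (hx : ¬ k ∣ x) : n = 0 := by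
  by_contra hn
  exact hx (h ▸ (dvd_pow_self k hn).mul_right m)

section

variable {k : ℤ}

theorem conjG_mk_zero (hk : k ≠ 0) (g : ℚ × ℤ) (y : ℚ) :
    conjG k g (y, 0) = ((k : ℚ) ^ g.2 * y, 0) := by
  have hk' : (k : ℚ) ^ g.2 * (k : ℚ) ^ (-g.2) = 1 := by
    rw [← zpow_add₀ (by exact_mod_cast hk), add_neg_cancel, zpow_zero]
  simp only [conjG, mulG, invG, add_zero, add_neg_cancel, Prod.mk.injEq, and_true]
  linear_combination -g.1 * hk'

theorem isConjG_mk_zero_iff (hk : k ≠ 0) (y x : ℚ) :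
    IsConjG k (y, 0) (x, 0) ↔ ∃ e : ℤ, (k : ℚ) ^ e * y = x := by
  simp only [IsConjG, conjG_mk_zero hk, Prod.mk.injEq, and_true]
  constructor
  · rintro ⟨g, -, hg⟩
    exact ⟨g.2, hg⟩
  · rintro ⟨e, he⟩
    exact ⟨(0, e), ⟨0, 0, by simp⟩, he⟩

theorem exists_zpow_mul_eq_int_not_dvd (hk : 1 < k.natAbs) {y : ℚ} (hy : y ∈ Zk k)
    (hy0 : y ≠ 0) : ∃ e m : ℤ, ¬ k ∣ m ∧ (k : ℚ) ^ e * y = m := by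
  have hk0 : (k : ℚ) ≠ 0 := by exact_mod_cast Int.natAbs_ne_zero.mp (by omega)
  obtain ⟨e, n, hn⟩ := hy
  have hn0 : n ≠ 0 := by
    rintro rfl
    exact mul_ne_zero (zpow_ne_zero e hk0) hy0 (by exact_mod_cast hn)
  obtain ⟨m, hnm, hm⟩ :=
    (Int.finiteMultiplicity_iff.mpr ⟨hk.ne', hn0⟩).exists_eq_pow_mul_and_not_dvd
  generalize multiplicity k n = v at hnm
  refine ⟨e - v, m, hm, ?_⟩
  rw [zpow_sub₀ hk0, div_mul_eq_mul_div, hn, hnm, div_eq_iff (zpow_ne_zero _ hk0)]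
  push_cast
  rw [zpow_natCast, mul_comm]

theorem eq_of_zpow_mul_eq (hk : k ≠ 0) {a m x : ℤ} (hm : ¬ k ∣ m) (hx : ¬ k ∣ x)
    (h : (k : ℚ) ^ a * m = x) : x = m := by
  obtain ⟨n, rfl | rfl⟩ := Int.eq_nat_or_neg a
  · have h' : k ^ n * m = x := by exact_mod_cast h
    rw [← h', eq_zero_of_pow_mul_eq_of_not_dvd h' hx, pow_zero, one_mul]
  · have h' : k ^ n * x = m := by
      rw [zpow_neg, inv_mul_eq_iff_eq_mul₀ (zpow_ne_zero _ (by exact_mod_cast hk))] at h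
      exact_mod_cast h.symm
    rw [← h', eq_zero_of_pow_mul_eq_of_not_dvd h' hm, pow_zero, one_mul]

end

theorem unique_integer_rep (k : ℤ) (hk : 2 ≤ k) (y : ℚ) (hy : y ∈ Zk k) (hy0 : y ≠ 0) :
    ∃! x : ℤ, ¬ (k ∣ x) ∧ IsConjG k (y, 0) ((x : ℚ), 0) := by
  have hk0 : k ≠ 0 := by omega
  obtain ⟨e, m, hm, hym⟩ := exists_zpow_mul_eq_int_not_dvd (by omega) hy hy0
  refine ⟨m, ⟨hm, (isConjG_mk_zero_iff hk0 y m).mpr ⟨e, hym⟩⟩, ?_⟩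
  rintro x ⟨hx, hxy⟩
  obtain ⟨e', hyx⟩ := (isConjG_mk_zero_iff hk0 y x).mp hxy
  refine eq_of_zpow_mul_eq hk0 hm hx (a := e' - e) ?_
  rw [← hym, ← mul_assoc, ← zpow_add₀ (by exact_mod_cast hk0), sub_add_cancel, hyx]
end

section
/- For every r ≥ 1, the polynomial p(z) = 1 - 2z - z² + 2z^{r+2} has a unique root ρ in the interval (0, 1/2] (with ρ = 1/2 exactly when r = 1), and this root is simple: p'(α) < 0 for all 0 < α ≤ 1/2. -/
/-!
On `[0, 1/2]` the derivative `p'(z) = -2 - 2z + 2(r+2) z^(r+1)` is at most `-2z`, because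
`(r+2) z^(r+1) ≤ (r+2) / 2^(r+1) ≤ 1`; so `p` is strictly decreasing there. Since `p 0 = 1` and
`p (1/2) = 2^-(r+1) - 1/4`, which is `≤ 0` for `r ≥ 1` and vanishes only for `r = 1`, the
intermediate value theorem gives exactly one root in `(0, 1/2]`, equal to `1/2` iff `r = 1`.
-/

/-- p(z) = 1 - 2z - z² + 2z^{r+2}. -/
def pPoly (r : ℕ) (z : ℝ) : ℝ := 1 - 2 * z - z ^ 2 + 2 * z ^ (r + 2)

open Set

theorem StrictAntiOn.existsUnique_mem_Ioc_eq {α δ : Type*} [ConditionallyCompleteLinearOrder α]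
    [TopologicalSpace α] [OrderTopology α] [DenselyOrdered α] [LinearOrder δ] [TopologicalSpace δ]
    [OrderClosedTopology δ] {f : α → δ} {a b : α} {c : δ} (hf : StrictAntiOn f (Icc a b))
    (hab : a ≤ b) (hcont : ContinuousOn f (Icc a b)) (hbc : f b ≤ c) (hca : c < f a) :
    ∃! x, x ∈ Ioc a b ∧ f x = c := by
  obtain ⟨x, hx, hfx⟩ := intermediate_value_Icc' hab hcont ⟨hbc, hca.le⟩
  have hxa : x ≠ a := by rintro rfl; exact hca.ne' hfx
  refine ⟨x, ⟨⟨lt_of_le_of_ne hx.1 hxa.symm, hx.2⟩, hfx⟩, ?_⟩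
  rintro y ⟨hy, hfy⟩
  exact hf.injOn (Ioc_subset_Icc_self hy) hx (hfy.trans hfx.symm)

namespace pPoly

theorem continuous (r : ℕ) : Continuous (pPoly r) := by
  unfold pPoly
  fun_prop

theorem hasDerivAt (r : ℕ) (z : ℝ) :
    HasDerivAt (pPoly r) (-2 - 2 * z + 2 * (r + 2) * z ^ (r + 1)) z := by
  have h : HasDerivAt (pPoly r) _ z :=
    ((((hasDerivAt_id' z).const_mul 2).const_sub 1).sub (hasDerivAt_pow 2 z)).add
      ((hasDerivAt_pow (r + 2) z).const_mul 2)
  refine h.congr_deriv ?_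
  push_cast [Nat.add_sub_cancel]
  ring

theorem deriv_lt_zero (r : ℕ) {z : ℝ} (hz : z ∈ Ioc (0 : ℝ) (1 / 2)) : deriv (pPoly r) z < 0 := by
  have hcoef : ((r : ℝ) + 2) / 2 ^ (r + 1) ≤ 1 := by
    rw [div_le_one (by positivity)]
    exact_mod_cast (Nat.lt_two_pow_self (n := r + 1))
  have hpow : (2 * z) ^ (r + 1) ≤ 1 := pow_le_one₀ (by linarith [hz.1]) (by linarith [hz.2])
  have hterm : (r + 2) * z ^ (r + 1) ≤ 1 :=
    calc (r + 2) * z ^ (r + 1) = (r + 2) / 2 ^ (r + 1) * (2 * z) ^ (r + 1) := by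
          rw [mul_pow]; field_simp
      _ ≤ 1 := mul_le_one₀ hcoef (pow_nonneg (by linarith [hz.1]) _) hpow
  rw [(hasDerivAt r z).deriv]
  linarith [hz.1]

theorem strictAntiOn (r : ℕ) : StrictAntiOn (pPoly r) (Icc 0 (1 / 2)) :=
  strictAntiOn_of_deriv_neg (convex_Icc _ _) (continuous r).continuousOn fun _ hz =>
    deriv_lt_zero r (by rw [interior_Icc] at hz; exact Ioo_subset_Ioc_self hz)

theorem apply_zero (r : ℕ) : pPoly r 0 = 1 := by
  simp [pPoly]

theorem apply_half (r : ℕ) : pPoly r (1 / 2) = (1 / 2) ^ (r + 1) - (1 / 2) ^ 2 := by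
  rw [pPoly, pow_succ _ (r + 1)]
  ring

theorem apply_half_nonpos {r : ℕ} (hr : 1 ≤ r) : pPoly r (1 / 2) ≤ 0 := by
  rw [apply_half, sub_nonpos]
  exact pow_le_pow_of_le_one (by norm_num) (by norm_num) (by omega)

theorem apply_half_eq_zero_iff (r : ℕ) : pPoly r (1 / 2) = 0 ↔ r = 1 := by
  rw [apply_half, sub_eq_zero, pow_right_inj₀ (by norm_num) (by norm_num)]
  omega

end pPoly

theorem pPoly_root_in_Ioc (r : ℕ) (hr : 1 ≤ r) :
    (∃! ρ : ℝ, ρ ∈ Set.Ioc (0 : ℝ) (1 / 2) ∧ pPoly r ρ = 0) ∧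
    (∀ ρ ∈ Set.Ioc (0 : ℝ) (1 / 2), pPoly r ρ = 0 → (ρ = 1 / 2 ↔ r = 1)) ∧
    (∀ α ∈ Set.Ioc (0 : ℝ) (1 / 2), deriv (pPoly r) α < 0) := by
  have hhalf : (1 / 2 : ℝ) ∈ Icc 0 (1 / 2) := ⟨by norm_num, le_rfl⟩
  refine ⟨(pPoly.strictAntiOn r).existsUnique_mem_Ioc_eq (by norm_num)
    (pPoly.continuous r).continuousOn (pPoly.apply_half_nonpos hr)
    (by rw [pPoly.apply_zero]; norm_num), fun ρ hρ hρ0 => ?_, fun α hα => pPoly.deriv_lt_zero r hα⟩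
  rw [← pPoly.apply_half_eq_zero_iff]
  constructor
  · rintro rfl
    exact hρ0
  · intro hhalf0
    exact (pPoly.strictAntiOn r).injOn (Ioc_subset_Icc_self hρ) hhalf (hρ0.trans hhalf0.symm)
end

section
/- Let k = 2r with r ≥ 2, m ≥ 1, and suppose (x_i)_{i=0}^{m-1} and (y_i)_{i=0}^{m-1} are integer sequences satisfying: |x_i| ≤ r and |y_i| ≤ r for all i; for all i (indices mod m), if x_{i-1} = r then 0 ≤ x_i < r and if x_{i-1} = -r then -r < x_i ≤ 0, and the same for y; and Σ_{i=0}^{m-1}(x_i - y_i)k^i = k^m - 1. Then x_i - y_i = k - 1 for all i, m is even, and (y_i) alternates between the values -r and -(r-1). -/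
/-!
Put `k = 2r` and `d i = x i - y i ∈ [-k, k]`. The successor condition passes to the differences:
after `d = k` the next difference lies in `[0, k - 2]`, after `d = -k` in `[2 - k, 0]`.
Reading `∑ d i * k ^ i = k ^ m - 1` from the lowest digit, each digit is determined modulo `k`
and what remains of the sum is `k ^ n - 1`, `k ^ n` or `k ^ n + 1` (a carry of `0`, `1` or `2`).
A remainder `k ^ n` can only be produced by zeros followed by a top digit `k`: a digit `±k` below
the top forces the next digit to be `∓1` modulo `k`, which the successor condition forbids.
Cyclically a top digit `k` forces `d 0 ∈ [0, k - 2]`, against `d 0 ≡ -1`. So every `d i = k - 1`,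
i.e. `(x i, y i)` is `(r, 1 - r)` or `(r - 1, -r)`, and the successor condition makes `y i = -r`
alternate around the cycle, which forces `m` to be even.
-/

open Finset

def ExtremalSucc (r a b : ℤ) : Prop :=
  (a = r → 0 ≤ b ∧ b < r) ∧ (a = -r → -r < b ∧ b ≤ 0)

def ExtremalSuccDiff (k a b : ℤ) : Prop :=
  (a = k → 0 ≤ b ∧ b ≤ k - 2) ∧ (a = -k → 2 - k ≤ b ∧ b ≤ 0)

lemma ExtremalSucc.sub {r x₀ x₁ y₀ y₁ : ℤ} (hx₀ : |x₀| ≤ r) (hy₀ : |y₀| ≤ r)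
    (hx : ExtremalSucc r x₀ x₁) (hy : ExtremalSucc r y₀ y₁) :
    ExtremalSuccDiff (2 * r) (x₀ - y₀) (x₁ - y₁) := by
  rw [abs_le] at hx₀ hy₀
  obtain ⟨hx_top, hx_bot⟩ := hx
  obtain ⟨hy_top, hy_bot⟩ := hy
  constructor
  · intro h
    have := hx_top (by linarith)
    have := hy_bot (by linarith)
    omega
  · intro h
    have := hx_bot (by linarith)
    have := hy_top (by linarith)
    omega

lemma succ_add_sub_one_mod {i m : ℕ} (h : i < m) : (i + 1 + m - 1) % m = i := by
  rw [show i + 1 + m - 1 = i + m by omega, Nat.add_mod_right, Nat.mod_eq_of_lt h]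

lemma zero_add_sub_one_mod {m : ℕ} (h : 0 < m) : (0 + m - 1) % m = m - 1 := by
  rw [zero_add]
  exact Nat.mod_eq_of_lt (by omega)

lemma eq_sub_or_eq_or_eq_add_of_dvd_sub {k d v : ℤ} (hk : 2 ≤ k) (hd : |d| ≤ k) (hv : |v| ≤ 1)
    (h : k ∣ d - v) : d = v - k ∨ d = v ∨ d = v + k := by
  obtain ⟨q, hq⟩ := h
  rw [abs_le] at hd hv
  have : -2 < q := by nlinarith
  have : q < 2 := by nlinarith
  interval_cases q <;> omega

lemma sum_range_succ_mul_pow {R : Type*} [CommSemiring R] (d : ℕ → R) (k : R) (n : ℕ) :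
    ∑ i ∈ range (n + 1), d i * k ^ i = d 0 + k * ∑ i ∈ range n, d (i + 1) * k ^ i := by
  rw [sum_range_succ', mul_sum, pow_zero, mul_one, add_comm]
  exact congrArg _ (sum_congr rfl fun i _ => by ring)

lemma head_tail_cases_of_sum_eq_pow_add {k v : ℤ} {n : ℕ} {d : ℕ → ℤ} (hk : 2 ≤ k)
    (hd : |d 0| ≤ k) (hv : |v| ≤ 1)
    (h : ∑ i ∈ range (n + 1), d i * k ^ i = k ^ (n + 1) + v) :
    (d 0 = v - k ∧ ∑ i ∈ range n, d (i + 1) * k ^ i = k ^ n + 1) ∨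
    (d 0 = v ∧ ∑ i ∈ range n, d (i + 1) * k ^ i = k ^ n) ∨
    (d 0 = v + k ∧ ∑ i ∈ range n, d (i + 1) * k ^ i = k ^ n - 1) := by
  rw [sum_range_succ_mul_pow, pow_succ'] at h
  have hk0 : k ≠ 0 := by omega
  have htail : ∀ c, d 0 = v - k * c → ∑ i ∈ range n, d (i + 1) * k ^ i = k ^ n + c := fun c hc =>
    mul_left_cancel₀ hk0 (by linear_combination h - hc)
  rcases eq_sub_or_eq_or_eq_add_of_dvd_sub hk hd hv ⟨k ^ n - ∑ i ∈ range n, d (i + 1) * k ^ i,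
    by linear_combination h⟩ with h0 | h0 | h0
  · exact Or.inl ⟨h0, htail 1 (by rw [h0]; ring)⟩
  · exact Or.inr (Or.inl ⟨h0, by simpa using htail 0 (by rw [h0]; ring)⟩)
  · exact Or.inr (Or.inr ⟨h0, by simpa [sub_eq_add_neg] using htail (-1) (by rw [h0]; ring)⟩)

lemma last_eq_of_sum_eq_pow {k : ℤ} (hk : 2 ≤ k) {n : ℕ} {d : ℕ → ℤ} (hb : ∀ i ≤ n, |d i| ≤ k)
    (hs : ∀ i < n, ExtremalSuccDiff k (d i) (d (i + 1)))
    (h : ∑ i ∈ range (n + 1), d i * k ^ i = k ^ (n + 1)) : d n = k := by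
  induction n generalizing d with
  | zero => simpa using h
  | succ n ih =>
    rcases head_tail_cases_of_sum_eq_pow_add (v := 0) hk (hb 0 (by omega)) (by simp)
      (by rw [h, add_zero]) with ⟨h₀, ht⟩ | ⟨-, ht⟩ | ⟨h₀, ht⟩
    · have := (hs 0 (by omega)).2 (by rw [h₀, zero_sub])
      rcases head_tail_cases_of_sum_eq_pow_add (d := fun i => d (i + 1)) (v := 1) hk
        (hb 1 (by omega)) (by simp) ht with ⟨h₁, -⟩ | ⟨h₁, -⟩ | ⟨h₁, -⟩ <;> omega
    · exact ih (fun i hi => hb (i + 1) (by omega)) (fun i hi => hs (i + 1) (by omega)) ht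
    · have := (hs 0 (by omega)).1 (by rw [h₀, zero_add])
      rcases head_tail_cases_of_sum_eq_pow_add (d := fun i => d (i + 1)) (v := -1) hk
        (hb 1 (by omega)) (by simp) (by rw [ht, sub_eq_add_neg])
        with ⟨h₁, -⟩ | ⟨h₁, -⟩ | ⟨h₁, -⟩ <;> omega

lemma eq_pred_or_last_eq_of_sum_eq_pow_sub_one {k : ℤ} (hk : 2 ≤ k) {n : ℕ} {d : ℕ → ℤ}
    (hb : ∀ i ≤ n, |d i| ≤ k) (hs : ∀ i < n, ExtremalSuccDiff k (d i) (d (i + 1)))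
    (h : ∑ i ∈ range (n + 1), d i * k ^ i = k ^ (n + 1) - 1) :
    (∀ i ≤ n, d i = k - 1) ∨ d n = k := by
  induction n generalizing d with
  | zero => exact Or.inl fun i hi => by simpa [Nat.le_zero.mp hi] using h
  | succ n ih =>
    have hb' : ∀ i ≤ n, |d (i + 1)| ≤ k := fun i hi => hb (i + 1) (by omega)
    have hs' : ∀ i < n, ExtremalSuccDiff k (d (i + 1)) (d (i + 1 + 1)) :=
      fun i hi => hs (i + 1) (by omega)
    rcases head_tail_cases_of_sum_eq_pow_add (v := -1) hk (hb 0 (by omega)) (by simp)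
      (by rw [h, sub_eq_add_neg]) with ⟨h₀, -⟩ | ⟨-, ht⟩ | ⟨h₀, ht⟩
    · have := abs_le.mp (hb 0 (by omega))
      omega
    · exact Or.inr (last_eq_of_sum_eq_pow (d := fun i => d (i + 1)) hk hb' hs' ht)
    · refine (ih hb' hs' ht).imp_left fun htail i hi => ?_
      cases i with
      | zero => linarith
      | succ i => exact htail i (by omega)

theorem eq_pred_of_sum_eq_pow_sub_one {k : ℤ} (hk : 2 ≤ k) {m : ℕ} (hm : 0 < m) {d : ℕ → ℤ}
    (hb : ∀ i < m, |d i| ≤ k) (hs : ∀ i < m, ExtremalSuccDiff k (d ((i + m - 1) % m)) (d i))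
    (h : ∑ i ∈ range m, d i * k ^ i = k ^ m - 1) : ∀ i < m, d i = k - 1 := by
  obtain ⟨n, rfl⟩ : ∃ n, m = n + 1 := ⟨m - 1, by omega⟩
  have hs_lin : ∀ i < n, ExtremalSuccDiff k (d i) (d (i + 1)) := fun i hi => by
    simpa only [succ_add_sub_one_mod (Nat.lt_succ_of_lt hi)] using hs (i + 1) (by omega)
  rcases eq_pred_or_last_eq_of_sum_eq_pow_sub_one hk (fun i hi => hb i (by omega)) hs_lin h
    with hall | hlast
  · exact fun i hi => hall i (by omega)
  · have := (hs 0 hm).1 (by rwa [zero_add_sub_one_mod hm, Nat.add_sub_cancel])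
    rcases head_tail_cases_of_sum_eq_pow_add (v := -1) hk (hb 0 hm) (by simp)
      (by rw [h, sub_eq_add_neg]) with ⟨h₀, -⟩ | ⟨h₀, -⟩ | ⟨h₀, -⟩ <;> omega

theorem even_and_iff_of_iff_not_prev {P : ℕ → Prop} {m : ℕ} (hm : 0 < m)
    (hP : ∀ i < m, P i ↔ ¬P ((i + m - 1) % m)) :
    m % 2 = 0 ∧ ∀ i < m, (P i ↔ (i % 2 = 0 ↔ P 0)) := by
  have hpar : ∀ i < m, (P i ↔ (i % 2 = 0 ↔ P 0)) := by
    intro i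
    induction i with
    | zero => simp
    | succ i ih =>
      intro hi
      rw [hP (i + 1) hi, succ_add_sub_one_mod (by omega), ih (by omega),
        show (i + 1) % 2 = 0 ↔ ¬i % 2 = 0 by omega]
      tauto
  refine ⟨?_, hpar⟩
  by_contra hodd
  have hwrap := hP 0 hm
  rw [zero_add_sub_one_mod hm, hpar (m - 1) (by omega)] at hwrap
  have : (m - 1) % 2 = 0 := by omega
  tauto

lemma eq_neg_iff_ne_neg_of_sub_eq {r x₀ x₁ y₀ y₁ : ℤ} (hx₀ : |x₀| ≤ r) (hy₀ : |y₀| ≤ r)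
    (hy₁ : |y₁| ≤ r) (h₀ : x₀ - y₀ = 2 * r - 1) (h₁ : x₁ - y₁ = 2 * r - 1)
    (hx : ExtremalSucc r x₀ x₁) (hy : ExtremalSucc r y₀ y₁) : y₁ = -r ↔ y₀ ≠ -r := by
  rw [abs_le] at hx₀ hy₀ hy₁
  constructor
  · intro h h'
    have := (hy.2 h').1
    omega
  · intro h
    have := (hx.1 (by omega)).2
    omega

theorem even_case_extremal_digits (r m : ℕ) (hr : 2 ≤ r) (hm : 1 ≤ m)
    (x y : ℕ → ℤ)
    (hxb : ∀ i < m, |x i| ≤ (r : ℤ)) (hyb : ∀ i < m, |y i| ≤ (r : ℤ))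
    (hxc : ∀ i < m,
      (x ((i + m - 1) % m) = (r : ℤ) → 0 ≤ x i ∧ x i < (r : ℤ)) ∧
      (x ((i + m - 1) % m) = -(r : ℤ) → -(r : ℤ) < x i ∧ x i ≤ 0))
    (hyc : ∀ i < m,
      (y ((i + m - 1) % m) = (r : ℤ) → 0 ≤ y i ∧ y i < (r : ℤ)) ∧
      (y ((i + m - 1) % m) = -(r : ℤ) → -(r : ℤ) < y i ∧ y i ≤ 0))
    (h : ∑ i ∈ Finset.range m, (x i - y i) * ((2 * r : ℤ)) ^ i = (2 * r : ℤ) ^ m - 1) :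
    (∀ i < m, x i - y i = 2 * (r : ℤ) - 1) ∧
    m % 2 = 0 ∧
    ((∀ i < m, y i = if i % 2 = 0 then -(r : ℤ) else -(r : ℤ) + 1) ∨
     (∀ i < m, y i = if i % 2 = 0 then -(r : ℤ) + 1 else -(r : ℤ))) := by
  have hprev : ∀ i, (i + m - 1) % m < m := fun i => Nat.mod_lt _ hm
  have hdiff : ∀ i < m, x i - y i = 2 * (r : ℤ) - 1 :=
    eq_pred_of_sum_eq_pow_sub_one (by omega) hm
      (fun i hi => (abs_sub _ _).trans (by linarith [hxb i hi, hyb i hi]))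
      (fun i hi => ExtremalSucc.sub (hxb _ (hprev i)) (hyb _ (hprev i)) (hxc i hi) (hyc i hi)) h
  obtain ⟨hm2, hpar⟩ := even_and_iff_of_iff_not_prev (P := fun i => y i = -r) hm fun i hi =>
    eq_neg_iff_ne_neg_of_sub_eq (hxb _ (hprev i)) (hyb _ (hprev i)) (hyb i hi)
      (hdiff _ (hprev i)) (hdiff i hi) (hxc i hi) (hyc i hi)
  have hy : ∀ i < m, y i = -r ∨ y i = -r + 1 := fun i hi => by
    have := abs_le.mp (hxb i hi)
    have := abs_le.mp (hyb i hi)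
    have := hdiff i hi
    omega
  refine ⟨hdiff, hm2, ?_⟩
  by_cases h₀ : y 0 = -r
  · refine Or.inl fun i hi => ?_
    have := hpar i hi
    rcases hy i hi with h' | h' <;> split_ifs <;> simp_all
  · refine Or.inr fun i hi => ?_
    have := hpar i hi
    rcases hy i hi with h' | h' <;> split_ifs <;> simp_all
end
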